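/- arXiv:2011.14382 — 5 statements merged into one kernel-verified Lean document; each statement's English description precedes it below -/
import Mathlib

section
/- Fix 0 < δ < 1 and consider two agents with unit sizes, single-resource budget B = 2, demands θ_1 = 1 + δ and θ_2 = 1 − δ, and filling-ratio utilities u(x, θ) = min(x/θ, 1). If (x_1, x_2) with x_1, x_2 ≥ 0 and x_1 + x_2 ≤ 2 is envy-free and Pareto-efficient, then x_1 = 1 + δ and x_2 = 1 − δ. -/
/-- Filling-ratio utility `min(x/θ, 1)`. -/
noncomputable def fillRatio (x θ : ℝ) : ℝ := min (x / θ) 1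

theorem fillRatio_le_one (x θ : ℝ) : fillRatio x θ ≤ 1 :=
  min_le_right _ _

theorem fillRatio_eq_one_iff {x θ : ℝ} (hθ : 0 < θ) : fillRatio x θ = 1 ↔ θ ≤ x := by
  rw [fillRatio, min_eq_right_iff, one_le_div hθ]

theorem fillRatio_self {θ : ℝ} (hθ : 0 < θ) : fillRatio θ θ = 1 :=
  (fillRatio_eq_one_iff hθ).2 le_rfl

def ParetoDominated (θ₁ θ₂ B x₁ x₂ : ℝ) : Prop :=
  ∃ y₁ y₂ : ℝ, 0 ≤ y₁ ∧ 0 ≤ y₂ ∧ y₁ + y₂ ≤ B ∧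
    fillRatio x₁ θ₁ ≤ fillRatio y₁ θ₁ ∧
    fillRatio x₂ θ₂ ≤ fillRatio y₂ θ₂ ∧
    (fillRatio x₁ θ₁ < fillRatio y₁ θ₁ ∨ fillRatio x₂ θ₂ < fillRatio y₂ θ₂)

/-- When the budget covers both demands, the demand vector itself gives every agent the maximal
utility `1`, so it dominates any allocation leaving some agent unsatisfied. -/
theorem le_of_not_paretoDominated {θ₁ θ₂ B x₁ x₂ : ℝ} (h₁ : 0 < θ₁) (h₂ : 0 < θ₂)
    (hθB : θ₁ + θ₂ ≤ B) (hPE : ¬ ParetoDominated θ₁ θ₂ B x₁ x₂) : θ₁ ≤ x₁ ∧ θ₂ ≤ x₂ := by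
  rw [← fillRatio_eq_one_iff h₁, ← fillRatio_eq_one_iff h₂]
  by_contra hunsat
  refine hPE ⟨θ₁, θ₂, h₁.le, h₂.le, hθB, ?_, ?_, ?_⟩
  · exact (fillRatio_self h₁).symm ▸ fillRatio_le_one x₁ θ₁
  · exact (fillRatio_self h₂).symm ▸ fillRatio_le_one x₂ θ₂
  · rw [fillRatio_self h₁, fillRatio_self h₂]
    rcases not_and_or.mp hunsat with hne | hne
    · exact Or.inl ((fillRatio_le_one x₁ θ₁).lt_of_ne hne)
    · exact Or.inr ((fillRatio_le_one x₂ θ₂).lt_of_ne hne)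

theorem fair_allocation_high_low_general (δ : ℝ) (hδ0 : 0 < δ) (hδ1 : δ < 1)
    (x₁ x₂ : ℝ) (hbudget : x₁ + x₂ ≤ 2)
    (hPE : ¬ ∃ y₁ y₂ : ℝ, 0 ≤ y₁ ∧ 0 ≤ y₂ ∧ y₁ + y₂ ≤ 2 ∧
        fillRatio x₁ (1 + δ) ≤ fillRatio y₁ (1 + δ) ∧
        fillRatio x₂ (1 - δ) ≤ fillRatio y₂ (1 - δ) ∧
        (fillRatio x₁ (1 + δ) < fillRatio y₁ (1 + δ) ∨
         fillRatio x₂ (1 - δ) < fillRatio y₂ (1 - δ))) :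
    x₁ = 1 + δ ∧ x₂ = 1 - δ := by
  obtain ⟨hx₁, hx₂⟩ := le_of_not_paretoDominated (by linarith) (by linarith) (by linarith) hPE
  constructor <;> linarith

/-- With two unit-size agents, budget `B = 2`, demands `θ₁ = 1 + δ`, `θ₂ = 1 - δ` and
filling-ratio utilities, any feasible allocation that is envy-free and Pareto-efficient
must be `(1 + δ, 1 - δ)`. -/
theorem fair_allocation_high_low (δ : ℝ) (hδ0 : 0 < δ) (hδ1 : δ < 1)
    (x₁ x₂ : ℝ) (hx₁ : 0 ≤ x₁) (hx₂ : 0 ≤ x₂) (hbudget : x₁ + x₂ ≤ 2)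
    (hEF : fillRatio x₂ (1 + δ) ≤ fillRatio x₁ (1 + δ) ∧
           fillRatio x₁ (1 - δ) ≤ fillRatio x₂ (1 - δ))
    (hPE : ¬ ∃ y₁ y₂ : ℝ, 0 ≤ y₁ ∧ 0 ≤ y₂ ∧ y₁ + y₂ ≤ 2 ∧
        fillRatio x₁ (1 + δ) ≤ fillRatio y₁ (1 + δ) ∧
        fillRatio x₂ (1 - δ) ≤ fillRatio y₂ (1 - δ) ∧
        (fillRatio x₁ (1 + δ) < fillRatio y₁ (1 + δ) ∨
         fillRatio x₂ (1 - δ) < fillRatio y₂ (1 - δ))) :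
    x₁ = 1 + δ ∧ x₂ = 1 - δ :=
  fair_allocation_high_low_general δ hδ0 hδ1 x₁ x₂ hbudget hPE
end

section
/- Fix 0 < δ < 1 and consider two agents with unit sizes, single-resource budget B = 2, and filling-ratio utilities u(x, θ) = min(x/θ, 1). There do not exist real numbers x_1 ≥ 0 and x_2, x_2' ≥ 0 with x_1 + x_2 ≤ 2 and x_1 + x_2' ≤ 2 such that simultaneously: (a) the allocation (x_1, x_2) is envy-free and Pareto-efficient for the demand profile (θ_1, θ_2) = (1 + δ, 1 + δ), and (b) the allocation (x_1, x_2') is envy-free and Pareto-efficient for the demand profile (θ_1, θ_2) = (1 + δ, 1 − δ). Consequently, no online allocation rule that must fix agent 1's allocation after observing only θ_1 = 1 + δ can guarantee ex-post envy-freeness and Pareto-efficiency on both demand realizations. -/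
/-- Envy-freeness of a two-agent allocation `(x₁, x₂)` for demands `(θ₁, θ₂)`
with filling-ratio utilities. -/
def EnvyFree2 (x₁ x₂ θ₁ θ₂ : ℝ) : Prop :=
  fillRatio x₂ θ₁ ≤ fillRatio x₁ θ₁ ∧ fillRatio x₁ θ₂ ≤ fillRatio x₂ θ₂

/-- Pareto-efficiency of a two-agent allocation `(x₁, x₂)` for demands `(θ₁, θ₂)`
with filling-ratio utilities, unit sizes and budget `2`. -/
def ParetoEfficient2 (x₁ x₂ θ₁ θ₂ : ℝ) : Prop :=
  ¬ ∃ y₁ y₂ : ℝ, 0 ≤ y₁ ∧ 0 ≤ y₂ ∧ y₁ + y₂ ≤ 2 ∧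
      fillRatio x₁ θ₁ ≤ fillRatio y₁ θ₁ ∧
      fillRatio x₂ θ₂ ≤ fillRatio y₂ θ₂ ∧
      (fillRatio x₁ θ₁ < fillRatio y₁ θ₁ ∨ fillRatio x₂ θ₂ < fillRatio y₂ θ₂)

theorem ParetoEfficient2.fillRatio_eq_one {x₁ x₂ θ₁ θ₂ : ℝ} (h : ParetoEfficient2 x₁ x₂ θ₁ θ₂)
    (hθ₁ : 0 < θ₁) (hθ₂ : 0 < θ₂) (hθ : θ₁ + θ₂ ≤ 2) :
    fillRatio x₁ θ₁ = 1 ∧ fillRatio x₂ θ₂ = 1 := by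
  by_contra hne
  refine h ⟨θ₁, θ₂, hθ₁.le, hθ₂.le, hθ, ?_, ?_, ?_⟩ <;>
    simp only [fillRatio_self hθ₁, fillRatio_self hθ₂]
  · exact fillRatio_le_one _ _
  · exact fillRatio_le_one _ _
  · by_contra! hge
    exact hne ⟨le_antisymm (fillRatio_le_one _ _) hge.1,
      le_antisymm (fillRatio_le_one _ _) hge.2⟩

theorem EnvyFree2.le_right_of_le_left {x₁ x₂ θ : ℝ} (h : EnvyFree2 x₁ x₂ θ θ) (hθ : 0 < θ)
    (hx₁ : θ ≤ x₁) : θ ≤ x₂ := by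
  have henvy := h.2
  rw [(fillRatio_eq_one_iff hθ).2 hx₁] at henvy
  exact (fillRatio_eq_one_iff hθ).1 (le_antisymm (fillRatio_le_one _ _) henvy)

/-- With two unit-size agents, budget `B = 2` and filling-ratio utilities, there is no
allocation `x₁` for the first agent (of demand `1 + δ`) that can be completed to an
envy-free and Pareto-efficient allocation both when the second agent's demand turns
out to be `1 + δ` and when it turns out to be `1 - δ`.  Hence no online algorithm can
guarantee ex-post envy-freeness and Pareto-efficiency on both realizations. -/
theorem no_online_fair_allocation (δ : ℝ) (hδ0 : 0 < δ) (hδ1 : δ < 1) :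
    ¬ ∃ (x₁ x₂ x₂' : ℝ), 0 ≤ x₁ ∧ 0 ≤ x₂ ∧ 0 ≤ x₂' ∧
        x₁ + x₂ ≤ 2 ∧ x₁ + x₂' ≤ 2 ∧
        EnvyFree2 x₁ x₂ (1 + δ) (1 + δ) ∧ ParetoEfficient2 x₁ x₂ (1 + δ) (1 + δ) ∧
        EnvyFree2 x₁ x₂' (1 + δ) (1 - δ) ∧ ParetoEfficient2 x₁ x₂' (1 + δ) (1 - δ) := by
  rintro ⟨x₁, x₂, x₂', -, -, -, hbudget, -, henvy, -, -, hpareto⟩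
  have hθ : 0 < 1 + δ := by linarith
  have hx₁ : 1 + δ ≤ x₁ :=
    (fillRatio_eq_one_iff hθ).1 (hpareto.fillRatio_eq_one hθ (by linarith) (by linarith)).1
  have hx₂ : 1 + δ ≤ x₂ := henvy.le_right_of_le_left hθ hx₁
  linarith
end

section
/- Let n ≥ 1 agents have demands θ_1,…,θ_n > 0 and sizes S_1,…,S_n > 0, let B > 0 be a single-resource budget, and let w_f ≥ 0 satisfy ∑_{i=1}^n S_i min(θ_i, w_f) = min(B, ∑_{i=1}^n S_i θ_i). Define the waterfilling allocation X_i = min(w_f, θ_i). Then X is feasible (∑_{i=1}^n S_i X_i ≤ B), each X_i > 0, and for every allocation Y with Y_i > 0 for all i and ∑_{i=1}^n S_i Y_i ≤ B, we have ∑_{i=1}^n S_i · log( min(Y_i/θ_i, 1) ) ≤ ∑_{i=1}^n S_i · log( min(X_i/θ_i, 1) ); that is, the waterfilling allocation maximizes the Eisenberg–Gale (log Nash Social Welfare) objective for filling-ratio utilities. -/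
/-!
The objective is concave, and at the waterfilling allocation `X i = min w (θ i)` the map
`x ↦ log (min (x / θ i) 1)` has supergradient `1 / w` for every agent (for a saturated agent,
`θ i ≤ w`, the supergradients at the kink `x = θ i` form `[0, 1 / θ i]`, which contains `1 / w`). Summing with weights `S i`,
the objective of any `Y` exceeds that of `X` by at most `(∑ S i * Y i - ∑ S i * X i) / w`, which is
`≤ 0` when the budget binds. When it does not bind, every agent is saturated and `X` attains the
maximal utility `1` for everybody.
-/

open Finset

lemma log_min_div_one_sub_le {θ w y : ℝ} (hθ : 0 < θ) (hw : 0 < w) (hy : 0 < y) :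
    Real.log (min (y / θ) 1) - Real.log (min (min w θ / θ) 1) ≤ (y - min w θ) / w := by
  set x := min w θ with hx_def
  have hx : 0 < x := lt_min hw hθ
  have hxθ : min (x / θ) 1 = x / θ := min_eq_left ((div_le_one hθ).2 (min_le_right _ _))
  have huθ : min (y / θ) 1 * θ = min y θ := by
    rw [min_mul_of_nonneg _ _ hθ.le, div_mul_cancel₀ _ hθ.ne', one_mul]
  have hu : 0 < min (y / θ) 1 := lt_min (div_pos hy hθ) one_pos
  have hlog : Real.log (min (y / θ) 1) - Real.log (x / θ) ≤ min y θ / x - 1 := by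
    rw [← Real.log_div hu.ne' (div_pos hx hθ).ne', ← huθ, div_div_eq_mul_div]
    exact Real.log_le_sub_one_of_pos (div_pos (mul_pos hu hθ) hx)
  rw [hxθ]
  refine hlog.trans ?_
  rcases le_total w θ with hwθ | hθw
  · rw [hx_def, min_eq_left hwθ, div_sub_one hw.ne']
    gcongr
    exact min_le_left _ _
  · rw [hx_def, min_eq_right hθw, div_sub_one hθ.ne']
    rcases le_total θ y with hθy | hyθ
    · rw [min_eq_right hθy, sub_self, zero_div]
      exact div_nonneg (sub_nonneg.2 hθy) hw.le
    · rw [min_eq_left hyθ]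
      simpa only [neg_div, neg_le_neg_iff] using
        div_le_div_of_nonneg_left (neg_nonneg.2 (sub_nonpos.2 hyθ)) hθ hθw

section

variable {ι : Type*} [Fintype ι] {θ S : ι → ℝ} {w : ℝ}

lemma pos_of_sum_mul_min_pos (hS : ∀ i, 0 ≤ S i) (h : 0 < ∑ i, S i * min (θ i) w) : 0 < w := by
  by_contra! hw
  have : ∑ i, S i * min (θ i) w ≤ 0 :=
    sum_nonpos fun i _ => mul_nonpos_of_nonneg_of_nonpos (hS i) ((min_le_right _ _).trans hw)
  linarith

lemma le_of_sum_mul_min_eq (hS : ∀ i, 0 < S i)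
    (h : ∑ i, S i * min (θ i) w = ∑ i, S i * θ i) (i : ι) : θ i ≤ w := by
  have hle : ∀ j ∈ univ, S j * min (θ j) w ≤ S j * θ j :=
    fun j _ => mul_le_mul_of_nonneg_left (min_le_left _ _) (hS j).le
  have hi := (sum_eq_sum_iff_of_le hle).1 h i (mem_univ i)
  exact min_eq_left_iff.1 (mul_left_cancel₀ (hS i).ne' hi)

lemma sum_mul_log_min_div_one_le (hθ : ∀ i, 0 < θ i) (hS : ∀ i, 0 ≤ S i) (hw : 0 < w)
    {Y : ι → ℝ} (hY : ∀ i, 0 < Y i) (hYX : ∑ i, S i * Y i ≤ ∑ i, S i * min w (θ i)) :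
    ∑ i, S i * Real.log (min (Y i / θ i) 1) ≤
      ∑ i, S i * Real.log (min (min w (θ i) / θ i) 1) := by
  have hgap : ∑ i, S i * Real.log (min (Y i / θ i) 1) -
      ∑ i, S i * Real.log (min (min w (θ i) / θ i) 1) ≤ 0 := calc
    _ = ∑ i, S i * (Real.log (min (Y i / θ i) 1) -
          Real.log (min (min w (θ i) / θ i) 1)) := by
      simp only [← sum_sub_distrib, mul_sub]
    _ ≤ ∑ i, S i * ((Y i - min w (θ i)) / w) :=
      sum_le_sum fun i _ =>
        mul_le_mul_of_nonneg_left (log_min_div_one_sub_le (hθ i) hw (hY i)) (hS i)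
    _ = (∑ i, S i * Y i - ∑ i, S i * min w (θ i)) / w := by
      rw [← sum_sub_distrib, sum_div]
      exact sum_congr rfl fun i _ => by ring
    _ ≤ 0 := div_nonpos_of_nonpos_of_nonneg (sub_nonpos.2 hYX) hw.le
  linarith

lemma sum_mul_log_min_div_one_nonpos (hθ : ∀ i, 0 < θ i) (hS : ∀ i, 0 ≤ S i)
    {Y : ι → ℝ} (hY : ∀ i, 0 ≤ Y i) : ∑ i, S i * Real.log (min (Y i / θ i) 1) ≤ 0 :=
  sum_nonpos fun i _ => mul_nonpos_of_nonneg_of_nonpos (hS i)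
    (Real.log_nonpos (le_min (div_nonneg (hY i) (hθ i).le) zero_le_one) (min_le_right _ _))

end

theorem waterfilling_maximizes_eisenberg_gale_general
    (n : ℕ) (θ S : Fin (n + 1) → ℝ)
    (hθ : ∀ i, 0 < θ i) (hS : ∀ i, 0 < S i)
    (B : ℝ) (hB : 0 < B)
    (wf : ℝ)
    (hthresh : ∑ i, S i * min (θ i) wf = min B (∑ i, S i * θ i))
    (X : Fin (n + 1) → ℝ) (hX : ∀ i, X i = min wf (θ i)) :
    (∑ i, S i * X i ≤ B) ∧ (∀ i, 0 < X i) ∧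
      (∀ Y : Fin (n + 1) → ℝ, (∀ i, 0 < Y i) → ∑ i, S i * Y i ≤ B →
        ∑ i, S i * Real.log (min (Y i / θ i) 1) ≤
          ∑ i, S i * Real.log (min (X i / θ i) 1)) := by
  obtain rfl : X = fun i => min wf (θ i) := funext hX
  have hθsum : 0 < ∑ i, S i * θ i := sum_pos (fun i _ => mul_pos (hS i) (hθ i)) univ_nonempty
  have hwf : 0 < wf :=
    pos_of_sum_mul_min_pos (fun i => (hS i).le) (hthresh ▸ lt_min hB hθsum)
  have hXsum : ∑ i, S i * min wf (θ i) = min B (∑ i, S i * θ i) := by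
    simpa only [min_comm] using hthresh
  refine ⟨hXsum.trans_le (min_le_left _ _), fun i => lt_min hwf (hθ i), fun Y hY hYB => ?_⟩
  rcases le_total B (∑ i, S i * θ i) with hbind | hslack
  · refine sum_mul_log_min_div_one_le hθ (fun i => (hS i).le) hwf hY ?_
    rwa [hXsum, min_eq_left hbind]
  · have hθwf := le_of_sum_mul_min_eq hS (hthresh.trans (min_eq_right hslack))
    simp only [min_eq_right (hθwf _), div_self (hθ _).ne', min_self, Real.log_one, mul_zero,
      sum_const_zero]
    exact sum_mul_log_min_div_one_nonpos hθ (fun i => (hS i).le) fun i => (hY i).le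

/-- The waterfilling allocation `X i = min w_f (θ i)` associated to a waterfilling
threshold `w_f` is feasible, strictly positive, and maximizes the Eisenberg–Gale
(log Nash Social Welfare) objective `∑ i, S i * log (min (Y i / θ i) 1)` over all
strictly positive feasible allocations `Y`. -/
theorem waterfilling_maximizes_eisenberg_gale
    (n : ℕ) (θ S : Fin (n + 1) → ℝ)
    (hθ : ∀ i, 0 < θ i) (hS : ∀ i, 0 < S i)
    (B : ℝ) (hB : 0 < B)
    (wf : ℝ) (hwf : 0 ≤ wf)
    (hthresh : ∑ i, S i * min (θ i) wf = min B (∑ i, S i * θ i))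
    (X : Fin (n + 1) → ℝ) (hX : ∀ i, X i = min wf (θ i)) :
    (∑ i, S i * X i ≤ B) ∧ (∀ i, 0 < X i) ∧
      (∀ Y : Fin (n + 1) → ℝ, (∀ i, 0 < Y i) → ∑ i, S i * Y i ≤ B →
        ∑ i, S i * Real.log (min (Y i / θ i) 1) ≤
          ∑ i, S i * Real.log (min (X i / θ i) 1)) :=
  waterfilling_maximizes_eisenberg_gale_general n θ S hθ hS B hB wf hthresh X hX
end

section
/- Let n ≥ 1 agents have demands θ_1,…,θ_n > 0 and sizes S_1,…,S_n > 0 with S = ∑_{i=1}^n S_i, let B > 0 be a single-resource budget, let w_f ≥ 0 satisfy ∑_{i=1}^n S_i min(θ_i, w_f) = min(B, ∑_{i=1}^n S_i θ_i), and define the waterfilling allocation X_i = min(w_f, θ_i). Then X is proportional for the filling-ratio utilities: for every agent i, min(X_i/θ_i, 1) ≥ min( B/(S θ_i), 1 ). -/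
/-!
If agent `i` is fully served there is nothing to show. Otherwise the threshold lies strictly
below `θ i`, so the water level does not reach every demand and the budget binds:
`B = ∑ S j * min (θ j) w_f ≤ S * w_f`. Hence the equal share `B / S` is at most `w_f = X i`.
-/

open Finset

section Waterfilling

variable {ι : Type*} [Fintype ι] {θ S : ι → ℝ} {B w : ℝ} {i : ι}

lemma sum_mul_min_lt_sum_mul (hS : ∀ j, 0 ≤ S j) (hSi : 0 < S i) (h : w < θ i) :
    ∑ j, S j * min (θ j) w < ∑ j, S j * θ j :=
  sum_lt_sum (fun j _ => mul_le_mul_of_nonneg_left (min_le_left _ _) (hS j))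
    ⟨i, mem_univ i, by rw [min_eq_right h.le]; exact mul_lt_mul_of_pos_left h hSi⟩

lemma sum_mul_min_eq_budget (hS : ∀ j, 0 ≤ S j) (hSi : 0 < S i)
    (hthresh : ∑ j, S j * min (θ j) w = min B (∑ j, S j * θ j)) (h : w < θ i) :
    ∑ j, S j * min (θ j) w = B := by
  have hlt := sum_mul_min_lt_sum_mul hS hSi h
  rw [hthresh] at hlt ⊢
  exact min_eq_left ((min_lt_iff.mp hlt).resolve_right (lt_irrefl _)).le

lemma budget_div_sum_le_threshold (hS : ∀ j, 0 ≤ S j) (hSi : 0 < S i)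
    (hthresh : ∑ j, S j * min (θ j) w = min B (∑ j, S j * θ j)) (h : w < θ i) :
    B / ∑ j, S j ≤ w := by
  rw [div_le_iff₀ (sum_pos' (fun j _ => hS j) ⟨i, mem_univ i, hSi⟩), mul_sum]
  calc B = ∑ j, S j * min (θ j) w := (sum_mul_min_eq_budget hS hSi hthresh h).symm
    _ ≤ ∑ j, w * S j := sum_le_sum fun j _ => by
      rw [mul_comm w]; exact mul_le_mul_of_nonneg_left (min_le_right _ _) (hS j)

end Waterfilling

theorem waterfilling_proportional_general
    (n : ℕ) (θ S : Fin (n + 1) → ℝ)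
    (hθ : ∀ i, 0 < θ i) (hS : ∀ i, 0 < S i)
    (B : ℝ)
    (wf : ℝ)
    (hthresh : ∑ i, S i * min (θ i) wf = min B (∑ i, S i * θ i))
    (X : Fin (n + 1) → ℝ) (hX : ∀ i, X i = min wf (θ i)) :
    ∀ i, min (B / ((∑ j, S j) * θ i)) 1 ≤ min (X i / θ i) 1 := by
  intro i
  rw [hX i]
  rcases le_or_gt (θ i) wf with h | h
  · rw [min_eq_right h, div_self (hθ i).ne', min_self]
    exact min_le_right _ _
  · rw [min_eq_left h.le, ← div_div]
    gcongr
    · exact (hθ i).le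
    · exact budget_div_sum_le_threshold (fun j => (hS j).le) (hS i) hthresh h

/-- The waterfilling allocation `X i = min w_f (θ i)` is proportional for the
filling-ratio utilities: every agent weakly prefers it to the equal share `B / S`
where `S = ∑ i, S i`. -/
theorem waterfilling_proportional
    (n : ℕ) (θ S : Fin (n + 1) → ℝ)
    (hθ : ∀ i, 0 < θ i) (hS : ∀ i, 0 < S i)
    (B : ℝ) (hB : 0 < B)
    (wf : ℝ) (hwf : 0 ≤ wf)
    (hthresh : ∑ i, S i * min (θ i) wf = min B (∑ i, S i * θ i))
    (X : Fin (n + 1) → ℝ) (hX : ∀ i, X i = min wf (θ i)) :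
    ∀ i, min (B / ((∑ j, S j) * θ i)) 1 ≤ min (X i / θ i) 1 :=
  waterfilling_proportional_general n θ S hθ hS B wf hthresh X hX
end

section
/- Let n ≥ 1 agents have demands θ_1,…,θ_n > 0 and sizes S_1,…,S_n > 0, let B > 0 be a single-resource budget, let w_f ≥ 0 satisfy ∑_{i=1}^n S_i min(θ_i, w_f) = min(B, ∑_{i=1}^n S_i θ_i), and define the waterfilling allocation X_i = min(w_f, θ_i). Then X is Pareto-efficient for the filling-ratio utilities: there is no allocation Y with Y_i ≥ 0 for all i and ∑_{i=1}^n S_i Y_i ≤ B such that min(Y_i/θ_i, 1) ≥ min(X_i/θ_i, 1) for all i and min(Y_j/θ_j, 1) > min(X_j/θ_j, 1) for some j. -/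
/-!
Since `X i ≤ θ i`, each utility is strictly increasing up to `X i`, so a Pareto improvement `Y`
satisfies `X ≤ Y` and strictly raises some agent `j` who is not yet saturated, `X j < θ j`. That unsaturated agent shows
`∑ S X < ∑ S θ`, so the threshold equation says `X` already spends the whole budget `B`, and `Y`,
spending strictly more than `X`, is infeasible.
-/

open Finset

section FillingRatio

variable {x y θ : ℝ}

theorem le_of_min_div_le_min_div (hθ : 0 < θ) (hx : x ≤ θ)
    (h : min (x / θ) 1 ≤ min (y / θ) 1) : x ≤ y := by
  rw [min_eq_left ((div_le_one hθ).mpr hx)] at h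
  exact (div_le_div_iff_of_pos_right hθ).mp (h.trans (min_le_left _ _))

theorem lt_of_min_div_lt_min_div (hθ : 0 < θ) (h : min (x / θ) 1 < min (y / θ) 1) :
    x < y ∧ x < θ := by
  have hxθ : x / θ < 1 :=
    (min_lt_iff.mp (h.trans_le (min_le_right _ _))).resolve_right (lt_irrefl 1)
  rw [min_eq_left hxθ.le] at h
  exact ⟨(div_lt_div_iff_of_pos_right hθ).mp (h.trans_le (min_le_left _ _)),
    (div_lt_one hθ).mp hxθ⟩

end FillingRatio

section WeightedSum

variable {ι : Type*} [Fintype ι] {S x y : ι → ℝ}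

theorem weighted_sum_lt_weighted_sum (hS : ∀ i, 0 < S i) (hle : ∀ i, x i ≤ y i) {j : ι}
    (hlt : x j < y j) : ∑ i, S i * x i < ∑ i, S i * y i :=
  sum_lt_sum (fun i _ => mul_le_mul_of_nonneg_left (hle i) (hS i).le)
    ⟨j, mem_univ j, mul_lt_mul_of_pos_left hlt (hS j)⟩

theorem weighted_sum_eq_of_eq_min_of_lt {B : ℝ} (hS : ∀ i, 0 < S i)
    (hsum : ∑ i, S i * x i = min B (∑ i, S i * y i)) (hle : ∀ i, x i ≤ y i) {j : ι}
    (hlt : x j < y j) : ∑ i, S i * x i = B := by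
  have hB : B ≤ ∑ i, S i * y i := by
    by_contra h
    rw [min_eq_right (not_le.mp h).le] at hsum
    exact (weighted_sum_lt_weighted_sum hS hle hlt).ne hsum
  rwa [min_eq_left hB] at hsum

end WeightedSum

theorem waterfilling_pareto_efficient_general
    (n : ℕ) (θ S : Fin (n + 1) → ℝ)
    (hθ : ∀ i, 0 < θ i) (hS : ∀ i, 0 < S i)
    (B : ℝ)
    (wf : ℝ)
    (hthresh : ∑ i, S i * min (θ i) wf = min B (∑ i, S i * θ i))
    (X : Fin (n + 1) → ℝ) (hX : ∀ i, X i = min wf (θ i)) :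
    ¬ ∃ Y : Fin (n + 1) → ℝ, (∀ i, 0 ≤ Y i) ∧ (∑ i, S i * Y i ≤ B) ∧
        (∀ i, min (X i / θ i) 1 ≤ min (Y i / θ i) 1) ∧
        (∃ j, min (X j / θ j) 1 < min (Y j / θ j) 1) := by
  rintro ⟨Y, -, hYB, hdom, j, hj⟩
  have hXθ : ∀ i, X i ≤ θ i := fun i => hX i ▸ min_le_right _ _
  have hXY : ∀ i, X i ≤ Y i := fun i => le_of_min_div_le_min_div (hθ i) (hXθ i) (hdom i)
  obtain ⟨hXYj, hXθj⟩ := lt_of_min_div_lt_min_div (hθ j) hj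
  have hsumX : ∑ i, S i * X i = min B (∑ i, S i * θ i) := by
    simpa only [hX, min_comm wf] using hthresh
  have hsumX_eq_B := weighted_sum_eq_of_eq_min_of_lt hS hsumX hXθ hXθj
  linarith [weighted_sum_lt_weighted_sum hS hXY hXYj]

/-- The waterfilling allocation `X i = min w_f (θ i)` is Pareto-efficient for the
filling-ratio utilities `u(x, θ) = min (x / θ) 1`. -/
theorem waterfilling_pareto_efficient
    (n : ℕ) (θ S : Fin (n + 1) → ℝ)
    (hθ : ∀ i, 0 < θ i) (hS : ∀ i, 0 < S i)
    (B : ℝ) (hB : 0 < B)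
    (wf : ℝ) (hwf : 0 ≤ wf)
    (hthresh : ∑ i, S i * min (θ i) wf = min B (∑ i, S i * θ i))
    (X : Fin (n + 1) → ℝ) (hX : ∀ i, X i = min wf (θ i)) :
    ¬ ∃ Y : Fin (n + 1) → ℝ, (∀ i, 0 ≤ Y i) ∧ (∑ i, S i * Y i ≤ B) ∧
        (∀ i, min (X i / θ i) 1 ≤ min (Y i / θ i) 1) ∧
        (∃ j, min (X j / θ j) 1 < min (Y j / θ j) 1) :=
  waterfilling_pareto_efficient_general n θ S hθ hS B wf hthresh X hX
end
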